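/- arXiv:2001.07042 — 3 statements merged into one kernel-verified Lean document; each statement's English description precedes it below -/
import Mathlib

section
/- Let p₀ be the uniform distribution on a set of size d, let B be a finite set of M sign vectors b ∈ {−1,1}^d each satisfying ∑_i b_i = 0, let ε ∈ [0,1], and define q_{b,ε}(i) = (1 + ε·b_i)/d. Let P₀ = p₀^⊗N and P₁ = (1/M)·∑_{b∈B} q_{b,ε}^⊗N be the N-fold product and mixture-of-products distributions respectively. Then χ²(P₁, P₀) + 1 ≤ (1/M²)·∑_{b,b′∈B} exp((N·ε²/d)·⟨b, b′⟩). -/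
/-!
Expanding the square of the mixture turns `χ²(P₁, P₀) + 1` into the average over pairs `(b, b')`
of `E_{P₀}[q_b^{⊗N} q_{b'}^{⊗N} / P₀²]`. This cross term tensorizes into the `N`-th power of the
single-coordinate term, which equals `1 + (ε²/d)⟨b, b'⟩` because `b` and `b'` sum to zero, and
`(1 + x)^N ≤ exp (N x)` for `x ≥ -1`; here `x ≥ -1` since `ε² ≤ 1` and `⟨b, b'⟩ ≥ -d`.
-/

open Finset

theorem sum_sq_mixture_div {Ω β : Type*} [Fintype Ω] (B : Finset β) (M : ℝ) (p : β → Ω → ℝ)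
    (q : Ω → ℝ) :
    ∑ ω, (M⁻¹ * ∑ b ∈ B, p b ω) ^ 2 / q ω =
      (M ^ 2)⁻¹ * ∑ b ∈ B, ∑ b' ∈ B, ∑ ω, p b ω * p b' ω / q ω := by
  have hω : ∀ ω, (M⁻¹ * ∑ b ∈ B, p b ω) ^ 2 / q ω =
      (M ^ 2)⁻¹ * ∑ b ∈ B, ∑ b' ∈ B, p b ω * p b' ω / q ω := fun ω => by
    rw [mul_pow, inv_pow, sq (∑ b ∈ B, p b ω), sum_mul_sum, mul_div_assoc, sum_div]
    simp_rw [sum_div]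
  simp_rw [hω, ← mul_sum]
  rw [sum_comm]
  exact congrArg _ (sum_congr rfl fun b _ => sum_comm)

theorem sum_pi_prod_mul_prod_div {α : Type*} [Fintype α] (N : ℕ) (f g h : α → ℝ) :
    ∑ ω : Fin N → α, (∏ j, f (ω j)) * (∏ j, g (ω j)) / ∏ j, h (ω j) =
      (∑ a, f a * g a / h a) ^ N := by
  rw [Fintype.sum_pow]
  exact sum_congr rfl fun ω _ => by rw [← prod_mul_distrib, ← prod_div_distrib]

theorem sum_perturbation_mul_perturbation_div_uniform {ι : Type*} [Fintype ι] [Nonempty ι]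
    (ε : ℝ) {b b' : ι → ℝ} (hb : ∑ i, b i = 0) (hb' : ∑ i, b' i = 0) :
    ∑ i, (1 + ε * b i) / Fintype.card ι * ((1 + ε * b' i) / Fintype.card ι) /
        (1 / Fintype.card ι) =
      1 + ε ^ 2 / Fintype.card ι * ∑ i, b i * b' i := by
  set n : ℝ := (Fintype.card ι : ℝ)
  have hn : n ≠ 0 := by positivity
  have hterm : ∀ i, (1 + ε * b i) / n * ((1 + ε * b' i) / n) / (1 / n) =
      (1 + ε * b i + ε * b' i + ε ^ 2 * (b i * b' i)) / n := by
    intro i; field_simp; ring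
  simp_rw [hterm, ← sum_div, sum_add_distrib, ← mul_sum, hb, hb']
  simp only [sum_const, card_univ, nsmul_eq_mul, mul_one, mul_zero, add_zero, n]
  field_simp

theorem one_add_pow_le_exp_mul {x : ℝ} (hx : -1 ≤ x) (n : ℕ) : (1 + x) ^ n ≤ Real.exp (n * x) := by
  rw [Real.exp_nat_mul]
  exact pow_le_pow_left₀ (by linarith) (by linarith [Real.add_one_le_exp x]) n

theorem neg_card_le_sum_mul {ι : Type*} [Fintype ι] {b b' : ι → ℝ} (hb : ∀ i, |b i| ≤ 1)
    (hb' : ∀ i, |b' i| ≤ 1) : -(Fintype.card ι : ℝ) ≤ ∑ i, b i * b' i := by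
  have hterm : ∀ i, -1 ≤ b i * b' i := fun i =>
    (abs_le.mp (abs_mul (b i) (b' i) ▸ mul_le_one₀ (hb i) (abs_nonneg _) (hb' i))).1
  simpa using sum_le_sum fun i (_ : i ∈ univ) => hterm i

theorem sum_pi_prod_perturbation_div_uniform_le_exp {d : ℕ} (hd : 0 < d) (N : ℕ) {ε : ℝ}
    (hε : |ε| ≤ 1) {b b' : Fin d → ℝ} (hb : ∀ i, |b i| ≤ 1) (hb' : ∀ i, |b' i| ≤ 1)
    (hb_sum : ∑ i, b i = 0) (hb'_sum : ∑ i, b' i = 0) :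
    ∑ ω : Fin N → Fin d, (∏ j, (1 + ε * b (ω j)) / d) * (∏ j, (1 + ε * b' (ω j)) / d) /
        ∏ _ : Fin N, (1 / (d : ℝ)) ≤
      Real.exp ((N * ε ^ 2 / d) * ∑ i, b i * b' i) := by
  have : Nonempty (Fin d) := ⟨⟨0, hd⟩⟩
  have hcross := sum_perturbation_mul_perturbation_div_uniform ε hb_sum hb'_sum
  simp only [Fintype.card_fin] at hcross
  have hx : -1 ≤ ε ^ 2 / d * ∑ i, b i * b' i := by
    have hinner := neg_card_le_sum_mul hb hb'
    have hε2 : ε ^ 2 ≤ 1 := (sq_le_one_iff_abs_le_one ε).mpr hε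
    rw [Fintype.card_fin] at hinner
    rw [div_mul_eq_mul_div, le_div_iff₀ (by positivity)]
    nlinarith [sq_nonneg ε]
  rw [sum_pi_prod_mul_prod_div N (fun i => (1 + ε * b i) / d) (fun i => (1 + ε * b' i) / d)
    fun _ => 1 / d, hcross]
  convert one_add_pow_le_exp_mul hx N using 2
  ring

open Finset in
theorem chiSq_mixture_product_bound_general (d N : ℕ) (hd : 0 < d)
    (ε : ℝ) (hε : ε ∈ Set.Icc (0:ℝ) 1)
    (B : Finset (Fin d → ℝ))
    (hBsign : ∀ b ∈ B, ∀ i, b i = 1 ∨ b i = -1)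
    (hBsum : ∀ b ∈ B, ∑ i, b i = 0) :
    (∑ ω : Fin N → Fin d,
        ((B.card : ℝ)⁻¹ * ∑ b ∈ B, ∏ j, (1 + ε * b (ω j)) / d)^2 /
          ∏ j : Fin N, (1/(d:ℝ))) ≤
      ((B.card : ℝ)^2)⁻¹ * ∑ b ∈ B, ∑ b' ∈ B,
        Real.exp ((N * ε^2 / d) * ∑ i, b i * b' i) := by
  have hε_abs : |ε| ≤ 1 := abs_le.mpr ⟨by linarith [hε.1], hε.2⟩
  have hB_abs : ∀ b ∈ B, ∀ i, |b i| ≤ 1 := fun b hb i =>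
    ((abs_eq zero_le_one).mpr (hBsign b hb i)).le
  rw [sum_sq_mixture_div]
  gcongr with b hb b' hb'
  exact sum_pi_prod_perturbation_div_uniform_le_exp hd N hε_abs (hB_abs b hb) (hB_abs b' hb')
    (hBsum b hb) (hBsum b' hb')

open Finset in
/-- Chi-squared bound between a mixture of product perturbations and the
product uniform distribution:
`χ²(P₁,P₀) + 1 ≤ (1/M²) ∑_{b,b'∈B} exp((Nε²/d)·⟨b,b'⟩)`. -/
theorem chiSq_mixture_product_bound (d N : ℕ) (hd : 0 < d)
    (ε : ℝ) (hε : ε ∈ Set.Icc (0:ℝ) 1)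
    (B : Finset (Fin d → ℝ)) (hBne : B.Nonempty)
    (hBsign : ∀ b ∈ B, ∀ i, b i = 1 ∨ b i = -1)
    (hBsum : ∀ b ∈ B, ∑ i, b i = 0) :
    (∑ ω : Fin N → Fin d,
        ((B.card : ℝ)⁻¹ * ∑ b ∈ B, ∏ j, (1 + ε * b (ω j)) / d)^2 /
          ∏ j : Fin N, (1/(d:ℝ))) ≤
      ((B.card : ℝ)^2)⁻¹ * ∑ b ∈ B, ∑ b' ∈ B,
        Real.exp ((N * ε^2 / d) * ∑ i, b i * b' i) :=
  chiSq_mixture_product_bound_general d N hd ε hε B hBsign hBsum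
end

section
/- Fix d > 0, ε ∈ (0,1], and k ≥ 2. Let b ∈ {−1,1}^{2k} be the alternating sign vector b_ℓ = (−1)^ℓ indexed around a cycle of length 2k, pairing entries as (w_i·γ_i, w_i·γ_{i+1}) for i = 1,…,k with indices mod k. Then inf over w ∈ ℝ₊^k, γ ∈ ℝ₊^k of (1/2)·∑_{i=1}^k ( |w_i·γ_i − (1+ε)/d| + |w_i·γ_{i+1} − (1−ε)/d| ) ≥ ε/(2d). -/
/-! Around a finite cycle the values `γ` cannot strictly decrease along every edge, so some
edge `i → i + 1` has `w i * γ i ≤ w i * γ (i + 1)`. That edge cannot overshoot the target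
`(1 + ε)/d` and undershoot the target `(1 - ε)/d` at the same time, so one of its two deviations
is at least `ε/d`. -/

theorem exists_apply_le_apply_add {G M : Type*} [AddGroup G] [Fintype G] [Nonempty G]
    [AddCommMonoid M] [LinearOrder M] [IsOrderedCancelAddMonoid M] (f : G → M) (a : G) :
    ∃ x, f x ≤ f (x + a) := by
  by_contra! h
  have hlt : ∑ x, f (x + a) < ∑ x, f x :=
    Finset.sum_lt_sum_of_nonempty Finset.univ_nonempty fun x _ => h x
  exact hlt.ne (Equiv.sum_comp (Equiv.addRight a) f)

theorem le_abs_sub_add_abs_sub_of_le {x y c δ : ℝ} (hxy : x ≤ y) :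
    δ ≤ |x - (c + δ)| + |y - (c - δ)| := by
  have hmax : δ ≤ max |x - (c + δ)| |y - (c - δ)| := by
    by_contra! h
    rw [max_lt_iff, abs_lt, abs_lt] at h
    linarith [h.1.1, h.2.2]
  exact hmax.trans (max_le_add_of_nonneg (abs_nonneg _) (abs_nonneg _))

/-- Quantitative single-cycle separation: the ℓ¹ projection error onto rank-one
products around a cycle with alternating perturbation targets is at least
`ε/(2d)`. -/
theorem single_cycle_separation (k : ℕ) (hk : 2 ≤ k) (d : ℝ)
    (ε : ℝ)
    (w γ : Fin k → ℝ) (hw : ∀ i, 0 ≤ w i) :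
    ε / (2 * d) ≤
      (1/2) * ∑ i : Fin k,
        (|w i * γ i - (1 + ε)/d| + |w i * γ (i + ⟨1, by omega⟩) - (1 - ε)/d|) := by
  have : NeZero k := ⟨by omega⟩
  obtain ⟨i, hi⟩ := exists_apply_le_apply_add γ ⟨1, by omega⟩
  have hedge : ε / d ≤ |w i * γ i - (1 + ε)/d| + |w i * γ (i + ⟨1, by omega⟩) - (1 - ε)/d| := by
    rw [add_div, sub_div]
    exact le_abs_sub_add_abs_sub_of_le (mul_le_mul_of_nonneg_left hi (hw i))
  calc ε / (2 * d) = 1/2 * (ε / d) := by ring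
    _ ≤ _ := by
      gcongr
      refine hedge.trans ?_
      apply Finset.single_le_sum (fun j _ => by positivity) (Finset.mem_univ i)
end

section
/- Suppose P : (choice set) × (item) → (0,1) are positive choice probabilities on all nonempty subsets of a finite set X such that for all x, y ∈ X and all C ⊆ X with x, y ∉ C: P(x, {x,y} ∪ C)/P(y, {x,y} ∪ C) = P(x, {x,y})/P(y, {x,y}), and ∑_{z ∈ S} P(z, S) = 1 for every set S of size ≥ 2. Then there exists a function γ : X → ℝ₊ such that P(x, S) = γ(x)/∑_{z∈S} γ(z) for every S of size ≥ 2 and every x ∈ S. -/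
open Finset in
/-- Luce's theorem: positive choice probabilities satisfying the IIA ratio
condition admit a ratio (Bradley–Terry–Luce) representation
`P(x,S) = γ(x) / ∑_{z∈S} γ(z)`. -/
theorem luce_ratio_representation {X : Type*} [Fintype X] [DecidableEq X]
    (hX : 2 ≤ Fintype.card X)
    (P : Finset X → X → ℝ)
    (hpos : ∀ S : Finset X, 2 ≤ S.card → ∀ x ∈ S, 0 < P S x ∧ P S x < 1)
    (hsum : ∀ S : Finset X, 2 ≤ S.card → ∑ z ∈ S, P S z = 1)
    (hIIA : ∀ x y : X, ∀ C : Finset X, x ≠ y → x ∉ C → y ∉ C →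
      P ({x, y} ∪ C) x / P ({x, y} ∪ C) y = P {x, y} x / P {x, y} y) :
    ∃ γ : X → ℝ, (∀ x, 0 < γ x) ∧
      ∀ S : Finset X, 2 ≤ S.card → ∀ x ∈ S, P S x = γ x / ∑ z ∈ S, γ z := by
  set γ : X → ℝ := fun x => P univ x with hγ
  have hcu : 2 ≤ (univ : Finset X).card := by simpa using hX
  have hγpos : ∀ x, 0 < γ x := fun x => (hpos univ hcu x (mem_univ x)).1
  -- ratio on any S equals ratio on univ
  have hratio : ∀ S : Finset X, 2 ≤ S.card → ∀ x ∈ S, ∀ y ∈ S,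
      P S x * γ y = P S y * γ x := by
    intro S hS x hx y hy
    rcases eq_or_ne x y with rfl | hxy
    · ring
    have key : ∀ T : Finset X, {x, y} ⊆ T → P T x / P T y = P {x, y} x / P {x, y} y := by
      intro T hT
      have hU : {x, y} ∪ (T \ {x, y}) = T := by
        rw [Finset.union_sdiff_self_eq_union, Finset.union_eq_right.2 hT]
      have := hIIA x y (T \ {x, y}) hxy
        (by simp [Finset.mem_sdiff]) (by simp [Finset.mem_sdiff])
      rw [hU] at this
      exact this
    have hSsub : {x, y} ⊆ S := by
      intro z hz
      simp only [Finset.mem_insert, Finset.mem_singleton] at hz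
      rcases hz with rfl | rfl <;> assumption
    have h1 := key S hSsub
    have h2 := key univ (Finset.subset_univ _)
    have heq : P S x / P S y = P univ x / P univ y := by rw [h1, ← h2]
    have hyS := (hpos S hS y hy).1
    have hyU := hγpos y
    field_simp at heq
    have hyU' : P univ y ≠ 0 := hyU.ne'
    rw [heq, show γ y = P univ y from rfl, show γ x = P univ x from rfl, div_mul_cancel₀ _ hyU']
  refine ⟨γ, hγpos, ?_⟩
  intro S hS x hx
  have hsum1 := hsum S hS
  have hsumpos : 0 < ∑ z ∈ S, γ z := by
    obtain ⟨z, hz⟩ := Finset.card_pos.mp (by omega : 0 < S.card)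
    exact Finset.sum_pos' (fun i _ => (hγpos i).le) ⟨z, hz, hγpos z⟩
  have hPx := (hpos S hS x hx).1
  have key : γ x = P S x * ∑ z ∈ S, γ z := by
    calc γ x = ∑ z ∈ S, P S z * γ x := by
            rw [← Finset.sum_mul, hsum1, one_mul]
      _ = ∑ z ∈ S, P S x * γ z := Finset.sum_congr rfl fun z hz => (hratio S hS z hz x hx)
      _ = P S x * ∑ z ∈ S, γ z := by rw [Finset.mul_sum]
  rw [key]
  field_simp
end
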